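/- For every rooted graph G with root v and every real x ≥ 2, letting y = x/2 - √(x²/4 - 1), the following are equivalent: λ₁(G, 0^∞) ≥ -x, and the matrix A_G + xI - y·E_{v,v} is positive semidefinite, where A_G is the adjacency matrix of G and E_{v,v} is the matrix whose only nonzero entry is a 1 in position (v,v). -/

import Mathlib

/-- A rooted graph: a finite simple graph with a distinguished root vertex. -/
structure RootedGraph where
  V : Type
  [fintypeV : Fintype V]
  G : SimpleGraph V
  root : V

attribute [instance] RootedGraph.fintypeV

/-- One-step extension of a rooted graph: attach a new path vertex (the new root)
to the old root, together with a clique of `k` new vertices each adjacent to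
both the old root and the new path vertex. -/
def RootedGraph.extend (F : RootedGraph) (k : ℕ) : RootedGraph where
  V := F.V ⊕ Option (Fin k)
  G :=
    { Adj := fun a b =>
        match a, b with
        | Sum.inl u, Sum.inl w => F.G.Adj u w
        | Sum.inl u, Sum.inr _ => u = F.root
        | Sum.inr _, Sum.inl w => w = F.root
        | Sum.inr x, Sum.inr y => x ≠ y
      symm := ⟨by
        rintro (u | x) (w | y) h
        · exact F.G.adj_symm h
        · exact h
        · exact h
        · exact h.symm⟩
      loopless := ⟨by
        rintro (u | x) h
        · exact F.G.loopless.irrefl u h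
        · exact h rfl⟩ }
  root := Sum.inr none

/-- The rowing graph `(F, a)`. -/
def RootedGraph.rowing (F : RootedGraph) (a : List ℕ) : RootedGraph :=
  a.foldl RootedGraph.extend F

open scoped Classical in
/-- Adjacency matrix of (the graph of) a rooted graph. -/
noncomputable def RootedGraph.adjMat (F : RootedGraph) : Matrix F.V F.V ℝ :=
  Matrix.of fun u v => if F.G.Adj u v then 1 else 0

/-- The smallest adjacency eigenvalue of a rooted graph. -/
noncomputable def RootedGraph.lam1 (F : RootedGraph) : ℝ :=
  sInf {t : ℝ | ∃ x : F.V → ℝ, x ≠ 0 ∧ F.adjMat.mulVec x = t • x}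

/-!
Write `M(x, y) = A + x I - y E_root`. Attaching one path vertex `t` to the root `a` adds
`y a² + 2 a t + (x - y) t²` to the quadratic form of `M(x, y)`, and when `y² + 1 = x y` this is
`(y a + t)² / y`. Hence `M(x, y) ⪰ 0` propagates along `(G, 0ⁿ)`, and there
`A + x I ⪰ M(x, y) ⪰ 0`, i.e. `λ₁ ≥ -x`. Conversely, a vector on `G` extends along the path by the
factor `-y` without changing the form of `M(x, y)`, while the root correction `y z_root²` decays
when `y < 1`. So if `λ₁(G, 0ⁿ) ≥ -x'` for large `n`, with `x' > x ≥ 2`, then `M(x', y(x')) ⪰ 0`;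
letting `x' ↓ x` gives `M(x, y) ⪰ 0`.
-/

open Matrix Filter Topology Set

namespace Matrix

variable {n : Type*} [DecidableEq n]

theorem isHermitian_single_self (v : n) : (single v v (1 : ℝ)).IsHermitian := by
  simp [IsHermitian]

variable [Fintype n]

theorem mem_spectrum_iff_exists_mulVec_eq_smul {K : Type*} [Field K] {A : Matrix n n K} {t : K} :
    t ∈ spectrum K A ↔ ∃ x, x ≠ 0 ∧ A *ᵥ x = t • x := by
  rw [← spectrum_toLin', ← Module.End.hasEigenvalue_iff_mem_spectrum]
  constructor
  · intro h
    obtain ⟨x, hx⟩ := h.exists_hasEigenvector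
    exact ⟨x, hx.2, hx.apply_eq_smul⟩
  · rintro ⟨x, hx0, hx⟩
    exact Module.End.hasEigenvalue_of_hasEigenvector ⟨Module.End.mem_eigenspace_iff.mpr hx, hx0⟩

theorem neg_le_sInf_spectrum_iff_posSemidef {A : Matrix n n ℝ} (hA : A.IsHermitian) {c : ℝ}
    (hc : 0 ≤ c) : -c ≤ sInf (spectrum ℝ A) ↔ (A + c • 1).PosSemidef := by
  have hshift : A + c • 1 = algebraMap ℝ _ c + A := by
    rw [add_comm, Algebra.algebraMap_eq_smul_one]
  rw [posSemidef_iff_isHermitian_and_spectrum_nonneg, hshift, ← spectrum.singleton_add_eq,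
    Set.singleton_add, Set.image_subset_iff]
  refine ⟨fun h => ⟨?_, fun t ht => ?_⟩, fun h => Real.le_sInf (fun t ht => ?_) (by linarith)⟩
  · rw [← hshift]
    exact hA.add (isHermitian_one.smul (IsSelfAdjoint.all c))
  · have := csInf_le A.finite_real_spectrum.bddBelow ht
    simp only [Set.mem_preimage, Set.mem_ofPred_eq]
    linarith
  · have := h.2 ht
    simp only [Set.mem_preimage, Set.mem_ofPred_eq] at this
    linarith

theorem dotProduct_smul_single_mulVec {R : Type*} [CommRing R] (y : R) (v : n) (z : n → R) :
    z ⬝ᵥ ((y • single v v 1) *ᵥ z) = y * z v ^ 2 := by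
  simp only [smul_single, smul_eq_mul, mul_one, single_mulVec_eq, dotProduct_smul,
    dotProduct_single]
  ring

theorem posSemidef_smul_single_self {y : ℝ} (hy : 0 ≤ y) (v : n) :
    (y • single v v (1 : ℝ)).PosSemidef :=
  .of_dotProduct_mulVec_nonneg ((isHermitian_single_self v).smul (IsSelfAdjoint.all y)) fun z => by
    rw [star_trivial, dotProduct_smul_single_mulVec]
    positivity

theorem dotProduct_add_smul_one_sub_smul_single_mulVec {R : Type*} [CommRing R] (A : Matrix n n R)
    (x y : R) (v : n) (z : n → R) :
    z ⬝ᵥ ((A + x • 1 - y • single v v 1) *ᵥ z) = z ⬝ᵥ (A *ᵥ z) + x * (z ⬝ᵥ z) - y * z v ^ 2 := by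
  rw [sub_mulVec, dotProduct_sub, dotProduct_smul_single_mulVec, add_mulVec, dotProduct_add,
    smul_mulVec, one_mulVec, dotProduct_smul, smul_eq_mul]

end Matrix

-- the smaller root of `t ^ 2 - x * t + 1`
noncomputable def smallerRoot (x : ℝ) : ℝ := x / 2 - Real.sqrt (x ^ 2 / 4 - 1)

theorem continuous_smallerRoot : Continuous smallerRoot := by
  unfold smallerRoot
  fun_prop

section smallerRoot

variable {x : ℝ}

theorem smallerRoot_mul_add (hx : 2 ≤ x) :
    smallerRoot x * (x / 2 + Real.sqrt (x ^ 2 / 4 - 1)) = 1 := by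
  have := Real.sq_sqrt (by nlinarith : (0 : ℝ) ≤ x ^ 2 / 4 - 1)
  unfold smallerRoot
  nlinarith

theorem smallerRoot_pos (hx : 2 ≤ x) : 0 < smallerRoot x := by
  have hprod := smallerRoot_mul_add hx
  have hsqrt := Real.sqrt_nonneg (x ^ 2 / 4 - 1)
  by_contra! hneg
  nlinarith

theorem smallerRoot_sq_add_one (hx : 2 ≤ x) : smallerRoot x ^ 2 + 1 = x * smallerRoot x := by
  have := smallerRoot_mul_add hx
  unfold smallerRoot at *
  nlinarith

theorem smallerRoot_lt_one (hx : 2 < x) : smallerRoot x < 1 := by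
  have : x / 2 - 1 < Real.sqrt (x ^ 2 / 4 - 1) := (Real.lt_sqrt (by linarith)).2 (by nlinarith)
  unfold smallerRoot
  linarith

end smallerRoot

namespace RootedGraph

theorem adjMat_isHermitian (F : RootedGraph) : F.adjMat.IsHermitian := by
  ext u w
  simp only [adjMat, conjTranspose_apply, of_apply, star_trivial]
  rw [F.G.adj_comm]

open scoped Classical in
theorem lam1_eq_sInf_spectrum (F : RootedGraph) : F.lam1 = sInf (spectrum ℝ F.adjMat) := by
  unfold lam1
  congr 1
  ext t
  exact mem_spectrum_iff_exists_mulVec_eq_smul.symm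

open scoped Classical in
theorem neg_le_lam1_iff (F : RootedGraph) {c : ℝ} (hc : 0 ≤ c) :
    -c ≤ F.lam1 ↔ (F.adjMat + c • 1).PosSemidef := by
  rw [lam1_eq_sInf_spectrum, neg_le_sInf_spectrum_iff_posSemidef F.adjMat_isHermitian hc]

section extend

variable (F : RootedGraph) (k : ℕ)

theorem adjMat_extend_inl_inl (u w : F.V) :
    (F.extend k).adjMat (Sum.inl u) (Sum.inl w) = F.adjMat u w := rfl

open scoped Classical in
theorem adjMat_extend_inl_inr (u : F.V) (o : Option (Fin k)) :
    (F.extend k).adjMat (Sum.inl u) (Sum.inr o) = if u = F.root then 1 else 0 := rfl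

open scoped Classical in
theorem adjMat_extend_inr_inl (o : Option (Fin k)) (w : F.V) :
    (F.extend k).adjMat (Sum.inr o) (Sum.inl w) = if w = F.root then 1 else 0 := rfl

theorem adjMat_extend_inr_self (o : Option (Fin k)) :
    (F.extend k).adjMat (Sum.inr o) (Sum.inr o) = 0 :=
  if_neg fun h => h rfl

end extend

theorem sum_extend_zero {M : Type*} [AddCommMonoid M] (F : RootedGraph)
    (f : (F.extend 0).V → M) : ∑ a, f a = ∑ u, f (Sum.inl u) + f (Sum.inr none) := by
  have h : ∑ a : F.V ⊕ Option (Fin 0), f a = ∑ u, f (Sum.inl u) + ∑ o, f (Sum.inr o) :=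
    Fintype.sum_sum_type f
  rwa [Fintype.sum_option, Fin.sum_univ_zero, add_zero] at h

open scoped Classical in
theorem dotProduct_adjMat_extend_zero_mulVec (F : RootedGraph) (z : (F.extend 0).V → ℝ) :
    z ⬝ᵥ ((F.extend 0).adjMat *ᵥ z) =
      (z ∘ Sum.inl) ⬝ᵥ (F.adjMat *ᵥ (z ∘ Sum.inl)) + 2 * z (Sum.inl F.root) * z (Sum.inr none) := by
  simp only [dotProduct, mulVec, sum_extend_zero, adjMat_extend_inl_inl, adjMat_extend_inl_inr,
    adjMat_extend_inr_inl, adjMat_extend_inr_self]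
  simp only [ite_mul, one_mul, zero_mul, mul_add, mul_ite, mul_zero, Finset.sum_add_distrib,
    Finset.sum_ite_eq', Finset.mem_univ, ↓reduceIte, add_zero]
  change _ = ∑ x, z (Sum.inl x) * ∑ x_1, F.adjMat x x_1 * z (Sum.inl x_1) + _
  ring

open scoped Classical in
noncomputable def shiftedAdjMat (F : RootedGraph) (x y : ℝ) : Matrix F.V F.V ℝ :=
  F.adjMat + x • 1 - y • single F.root F.root 1

open scoped Classical in
theorem shiftedAdjMat_isHermitian (F : RootedGraph) (x y : ℝ) :
    (F.shiftedAdjMat x y).IsHermitian :=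
  (F.adjMat_isHermitian.add (isHermitian_one.smul (IsSelfAdjoint.all x))).sub
    ((isHermitian_single_self _).smul (IsSelfAdjoint.all y))

open scoped Classical in
theorem dotProduct_shiftedAdjMat_mulVec (F : RootedGraph) (x y : ℝ) (z : F.V → ℝ) :
    z ⬝ᵥ (F.shiftedAdjMat x y *ᵥ z) = z ⬝ᵥ (F.adjMat *ᵥ z) + x * (z ⬝ᵥ z) - y * z F.root ^ 2 :=
  dotProduct_add_smul_one_sub_smul_single_mulVec _ _ _ _ _

theorem dotProduct_shiftedAdjMat_extend_zero_mulVec (F : RootedGraph) {x y : ℝ} (hy : y ≠ 0)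
    (hxy : y ^ 2 + 1 = x * y) (z : (F.extend 0).V → ℝ) :
    z ⬝ᵥ ((F.extend 0).shiftedAdjMat x y *ᵥ z) =
      (z ∘ Sum.inl) ⬝ᵥ (F.shiftedAdjMat x y *ᵥ (z ∘ Sum.inl)) +
        (y * z (Sum.inl F.root) + z (Sum.inr none)) ^ 2 / y := by
  -- with `x - y = 1 / y`, the new terms `y a² + 2 a t + (x - y) t²` complete to a square
  rw [dotProduct_shiftedAdjMat_mulVec, dotProduct_shiftedAdjMat_mulVec,
    dotProduct_adjMat_extend_zero_mulVec]
  simp only [dotProduct, sum_extend_zero]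
  change _ - y * z (Sum.inr none) ^ 2 =
    _ + x * ∑ u, z (Sum.inl u) * z (Sum.inl u) - y * z (Sum.inl F.root) ^ 2 + _
  field_simp
  linear_combination -z (Sum.inr none) ^ 2 * hxy

theorem posSemidef_shiftedAdjMat_extend_zero {F : RootedGraph} {x y : ℝ} (hy : 0 < y)
    (hxy : y ^ 2 + 1 = x * y) (h : (F.shiftedAdjMat x y).PosSemidef) :
    ((F.extend 0).shiftedAdjMat x y).PosSemidef := by
  refine .of_dotProduct_mulVec_nonneg (shiftedAdjMat_isHermitian _ _ _) fun z => ?_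
  rw [star_trivial, dotProduct_shiftedAdjMat_extend_zero_mulVec F hy.ne' hxy]
  have := h.dotProduct_mulVec_nonneg (z ∘ Sum.inl)
  rw [star_trivial] at this
  positivity

theorem exists_extend_zero_dotProduct_shiftedAdjMat_mulVec_eq (F : RootedGraph) {x y : ℝ}
    (hy : y ≠ 0) (hxy : y ^ 2 + 1 = x * y) (z : F.V → ℝ) :
    ∃ w : (F.extend 0).V → ℝ,
      w ⬝ᵥ ((F.extend 0).shiftedAdjMat x y *ᵥ w) = z ⬝ᵥ (F.shiftedAdjMat x y *ᵥ z) ∧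
        w (F.extend 0).root = -y * z F.root := by
  let w : (F.extend 0).V → ℝ := Sum.elim z fun _ => -y * z F.root
  refine ⟨w, (dotProduct_shiftedAdjMat_extend_zero_mulVec F hy hxy w).trans ?_, rfl⟩
  change z ⬝ᵥ (_ *ᵥ z) + (y * z F.root + -y * z F.root) ^ 2 / y = _
  simp

theorem rowing_replicate_zero_succ (G : RootedGraph) (n : ℕ) :
    G.rowing (List.replicate (n + 1) 0) = (G.rowing (List.replicate n 0)).extend 0 := by
  rw [List.replicate_succ', rowing, List.foldl_append]
  rfl

theorem posSemidef_shiftedAdjMat_rowing {G : RootedGraph} {x y : ℝ} (hy : 0 < y)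
    (hxy : y ^ 2 + 1 = x * y) (h : (G.shiftedAdjMat x y).PosSemidef) (n : ℕ) :
    ((G.rowing (List.replicate n 0)).shiftedAdjMat x y).PosSemidef := by
  induction n with
  | zero => exact h
  | succ n ih =>
    rw [rowing_replicate_zero_succ]
    exact posSemidef_shiftedAdjMat_extend_zero hy hxy ih

theorem exists_rowing_dotProduct_shiftedAdjMat_mulVec_eq (G : RootedGraph) {x y : ℝ}
    (hy : y ≠ 0) (hxy : y ^ 2 + 1 = x * y) (z : G.V → ℝ) (n : ℕ) :
    ∃ w : (G.rowing (List.replicate n 0)).V → ℝ,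
      w ⬝ᵥ ((G.rowing (List.replicate n 0)).shiftedAdjMat x y *ᵥ w) =
        z ⬝ᵥ (G.shiftedAdjMat x y *ᵥ z) ∧
      w (G.rowing (List.replicate n 0)).root = (-y) ^ n * z G.root := by
  induction n with
  | zero => exact ⟨z, rfl, by simp [rowing]⟩
  | succ n ih =>
    obtain ⟨w, hw, hroot⟩ := ih
    obtain ⟨w', hw', hroot'⟩ := exists_extend_zero_dotProduct_shiftedAdjMat_mulVec_eq _ hy hxy w
    rw [rowing_replicate_zero_succ]
    exact ⟨w', hw'.trans hw, by rw [hroot', hroot]; ring⟩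

open scoped Classical in
theorem shiftedAdjMat_add_smul_single (F : RootedGraph) (x y : ℝ) :
    F.shiftedAdjMat x y + y • single F.root F.root 1 = F.adjMat + x • 1 :=
  sub_add_cancel _ _

open scoped Classical in
theorem posSemidef_adjMat_add_smul_one_of_shiftedAdjMat {F : RootedGraph} {x y : ℝ} (hy : 0 ≤ y)
    (h : (F.shiftedAdjMat x y).PosSemidef) : (F.adjMat + x • 1).PosSemidef := by
  rw [← shiftedAdjMat_add_smul_single]
  exact h.add (posSemidef_smul_single_self hy _)

open scoped Classical in
theorem posSemidef_shiftedAdjMat_of_eventually_posSemidef_rowing (G : RootedGraph) {x y : ℝ}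
    (hy0 : 0 < y) (hy1 : y < 1) (hxy : y ^ 2 + 1 = x * y)
    (h : ∀ᶠ n in atTop, ((G.rowing (List.replicate n 0)).adjMat + x • 1).PosSemidef) :
    (G.shiftedAdjMat x y).PosSemidef := by
  refine .of_dotProduct_mulVec_nonneg (G.shiftedAdjMat_isHermitian x y) fun z => ?_
  rw [star_trivial]
  have hdecay : Tendsto (fun n : ℕ => -(y * z G.root ^ 2) * (y ^ 2) ^ n) atTop (𝓝 0) := by
    simpa using (tendsto_pow_atTop_nhds_zero_of_lt_one (sq_nonneg y)
      (by nlinarith)).const_mul (-(y * z G.root ^ 2))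
  refine le_of_tendsto hdecay (h.mono fun n hn => ?_)
  obtain ⟨w, hw, hroot⟩ := G.exists_rowing_dotProduct_shiftedAdjMat_mulVec_eq hy0.ne' hxy z n
  have hnonneg := hn.dotProduct_mulVec_nonneg w
  rw [star_trivial, ← shiftedAdjMat_add_smul_single, add_mulVec, dotProduct_add, hw,
    dotProduct_smul_single_mulVec, hroot] at hnonneg
  have hsq : ((-y) ^ n) ^ 2 = (y ^ 2) ^ n := by rw [← pow_mul, pow_mul', neg_sq]
  rw [mul_pow, hsq] at hnonneg
  linarith

theorem posSemidef_shiftedAdjMat_of_forall_gt (F : RootedGraph) {f : ℝ → ℝ} {x : ℝ}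
    (hf : ContinuousWithinAt f (Ioi x) x) (h : ∀ x' > x, (F.shiftedAdjMat x' (f x')).PosSemidef) :
    (F.shiftedAdjMat x (f x)).PosSemidef := by
  refine .of_dotProduct_mulVec_nonneg (F.shiftedAdjMat_isHermitian _ _) fun z => ?_
  rw [star_trivial]
  have hq : ContinuousWithinAt (fun t => z ⬝ᵥ (F.shiftedAdjMat t (f t) *ᵥ z)) (Ioi x) x := by
    simp only [dotProduct_shiftedAdjMat_mulVec]
    fun_prop
  refine ge_of_tendsto hq (eventually_nhdsWithin_of_forall fun t ht => ?_)
  simpa using (h t ht).dotProduct_mulVec_nonneg z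

end RootedGraph

open RootedGraph

open scoped Classical in
/-- For every rooted graph `G` with root `v` and every real `x ≥ 2`, with
`y = x/2 - √(x²/4 - 1)`: `λ₁(G, 0^∞) ≥ -x` if and only if `A_G + xI - yE_{v,v}` is
positive semidefinite. -/
theorem lam1_rowing_limit_ge_iff_posSemidef (G : RootedGraph) (x : ℝ) (hx : 2 ≤ x)
    (y : ℝ) (hy : y = x / 2 - Real.sqrt (x ^ 2 / 4 - 1)) (L : ℝ)
    (hL : Filter.Tendsto (fun n : ℕ => (G.rowing (List.replicate n 0)).lam1)
      Filter.atTop (nhds L)) :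
    -x ≤ L ↔
      (G.adjMat + x • (1 : Matrix G.V G.V ℝ) -
        y • Matrix.single G.root G.root 1).PosSemidef := by
  obtain rfl : y = smallerRoot x := hy
  change _ ↔ (G.shiftedAdjMat x (smallerRoot x)).PosSemidef
  constructor
  · intro hLx
    refine G.posSemidef_shiftedAdjMat_of_forall_gt continuous_smallerRoot.continuousWithinAt
      fun x' hx' => ?_
    have hx'2 : 2 < x' := by linarith
    refine G.posSemidef_shiftedAdjMat_of_eventually_posSemidef_rowing (smallerRoot_pos hx'2.le)
      (smallerRoot_lt_one hx'2) (smallerRoot_sq_add_one hx'2.le) ?_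
    filter_upwards [hL.eventually (lt_mem_nhds (by linarith : -x' < L))] with n hn
    exact (neg_le_lam1_iff _ (by linarith)).1 hn.le
  · intro h
    refine ge_of_tendsto hL (.of_forall fun n => (neg_le_lam1_iff _ (by linarith)).2 ?_)
    exact posSemidef_adjMat_add_smul_one_of_shiftedAdjMat (smallerRoot_pos hx).le
      (posSemidef_shiftedAdjMat_rowing (smallerRoot_pos hx) (smallerRoot_sq_add_one hx) h n)
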